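/- The middle-thirds Cantor set, viewed as a subset of ℂ̂ via the inclusions [0,1] ⊂ ℝ ⊂ ℂ ⊂ ℂ̂, is ambiently quasiconformally homogeneous. -/

import Mathlib

open scoped Topology

/-- The spherical-ratio linear dilatation of `f` at `x`, computed with respect to
distance functions `dX` and `dY`:
`H_f(x) = limsup_{r→0⁺} (sup {dY (f x) (f y) : dX x y = r}) / (inf {dY (f x) (f y) : dX x y = r})`. -/
noncomputable def linDil {X Y : Type*} (dX : X → X → ℝ) (dY : Y → Y → ℝ)
    (f : X → Y) (x : X) : ℝ :=
  Filter.limsup (fun r : ℝ =>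
      sSup ((fun y => dY (f x) (f y)) '' {y | dX x y = r}) /
      sInf ((fun y => dY (f x) (f y)) '' {y | dX x y = r}))
    (𝓝[>] (0 : ℝ))

/-- A homeomorphism `f` is `K`-quasiconformal (with respect to the distance functions
`dX`, `dY`) if `K ≥ 1` and the linear dilatation of `f` is at most `K` at every point. -/
def IsQCWith {X Y : Type*} [TopologicalSpace X] [TopologicalSpace Y]
    (dX : X → X → ℝ) (dY : Y → Y → ℝ) (K : ℝ) (f : X ≃ₜ Y) : Prop :=
  1 ≤ K ∧ ∀ x, linDil dX dY (⇑f) x ≤ K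

/-- The chordal distance on the one-point compactification of a normed group. -/
noncomputable def chordal {E : Type*} [NormedAddCommGroup E] : OnePoint E → OnePoint E → ℝ
  | Option.some x, Option.some y => 2 * ‖x - y‖ / Real.sqrt ((1 + ‖x‖ ^ 2) * (1 + ‖y‖ ^ 2))
  | Option.some x, Option.none => 2 / Real.sqrt (1 + ‖x‖ ^ 2)
  | Option.none, Option.some y => 2 / Real.sqrt (1 + ‖y‖ ^ 2)
  | Option.none, Option.none => 0

/-- `f` is a `K`-quasiconformal homeomorphism of the Riemann sphere `ℂ̂ = OnePoint ℂ`,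
with respect to the chordal distance. -/
def IsQCSphere (K : ℝ) (f : OnePoint ℂ ≃ₜ OnePoint ℂ) : Prop :=
  IsQCWith chordal chordal K f

/-- `R ⊆ ℂ̂` is ambiently quasiconformally homogeneous: there is `K ≥ 1` such that any
point of `R` can be mapped to any other point of `R` by a `K`-quasiconformal
homeomorphism of `ℂ̂` preserving `R`. -/
def AmbQCH (R : Set (OnePoint ℂ)) : Prop :=
  ∃ K : ℝ, ∀ x ∈ R, ∀ y ∈ R, ∃ f : OnePoint ℂ ≃ₜ OnePoint ℂ,
    IsQCSphere K f ∧ f '' R = R ∧ f x = y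

/-- The unit circle of `ℂ`, viewed inside the Riemann sphere. -/
def unitCircleSphere : Set (OnePoint ℂ) := (fun z : ℂ => (z : OnePoint ℂ)) '' Metric.sphere 0 1

/-- A quasicircle is the image of the unit circle under a quasiconformal
homeomorphism of the Riemann sphere. -/
def IsQuasicircle (J : Set (OnePoint ℂ)) : Prop :=
  ∃ (K : ℝ) (f : OnePoint ℂ ≃ₜ OnePoint ℂ), IsQCSphere K f ∧ J = f '' unitCircleSphere

/-!
Let `x, y` lie in the Cantor set `C`, with ternary addresses `a, b`. Let `D m` be the disc of
radius `4/3 · 3⁻ᵐ` about the centre `cₐ m` of the level-`m` block of `a`; these discs are nested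
and shrink to `x`. Outside `D 0` the map is the identity; on `D m \ D (m + 1)` it is the
isometry `z ↦ c_b m ± (z - cₐ m)` carrying the level-`m` block of `a` onto that of `b`,
precomposed with a twist about `cₐ m`: the disc of radius `3⁻ᵐ` (which contains `D (m + 1)`) is
turned by `π` exactly when the sign of the isometry changes between levels `m` and `m + 1`, and
the angle decays linearly to `0` across the annulus. The annuli miss `C`, each twist is
`14`-Lipschitz, and two points at different depths are compared through a common centre, so the
map is `14`-bi-Lipschitz, preserves `C` and sends `x` to `y`. Being the identity outside a disc,
it is bi-Lipschitz for the chordal metric too, hence quasiconformal with a constant independent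
of `x` and `y`.
-/

open Complex Set Filter Metric
open scoped NNReal Real

section Dilatation

theorem sSup_div_sInf_mem_Icc {S : Set ℝ} {lo hi : ℝ} (hlo : 0 < lo) (hhi : 0 ≤ hi)
    (hS : S ⊆ Icc lo hi) : sSup S / sInf S ∈ Icc 0 (hi / lo) := by
  rcases S.eq_empty_or_nonempty with rfl | hne
  · simpa using div_nonneg hhi hlo.le
  have hinf : lo ≤ sInf S := le_csInf hne fun e he => (hS he).1
  have hsup : sSup S ≤ hi := csSup_le hne fun e he => (hS he).2
  obtain ⟨e, he⟩ := hne
  have hsup' : lo ≤ sSup S := (hS he).1.trans (le_csSup ⟨hi, fun e he => (hS he).2⟩ he)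
  exact ⟨div_nonneg (hlo.le.trans hsup') (hlo.le.trans hinf),
    div_le_div₀ hhi hsup hlo hinf⟩

variable {X Y : Type*} {dX : X → X → ℝ} {dY : Y → Y → ℝ} {A B : ℝ}

theorem linDil_le_mul {f : X → Y} (hA : 0 ≤ A) (hB : 0 < B)
    (hf : ∀ p q, dY (f p) (f q) ≤ A * dX p q) (hf' : ∀ p q, dX p q ≤ B * dY (f p) (f q))
    (p : X) : linDil dX dY f p ≤ A * B := by
  have hratio (r : ℝ) (hr : 0 < r) :=
    sSup_div_sInf_mem_Icc (div_pos hr hB) (mul_nonneg hA hr.le)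
      (S := (fun q => dY (f p) (f q)) '' {q | dX p q = r}) <| by
        rintro - ⟨q, rfl, rfl⟩
        exact ⟨(div_le_iff₀' hB).2 (hf' p q), hf p q⟩
  unfold linDil
  apply limsup_le_of_le
  · exact IsCoboundedUnder.of_frequently_ge <|
      (eventually_nhdsWithin_of_forall (s := Ioi 0) fun r hr => (hratio r hr).1).frequently
  · refine eventually_nhdsWithin_of_forall (s := Ioi 0) fun r hr => (hratio r hr).2.trans_eq ?_
    field_simp [(mem_Ioi.1 hr).ne']

theorem isQCWith_of_biLipschitz [TopologicalSpace X] [TopologicalSpace Y] {e : X ≃ₜ Y}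
    (hA : 0 ≤ A) (hB : 0 < B) (hAB : 1 ≤ A * B) (he : ∀ p q, dY (e p) (e q) ≤ A * dX p q)
    (he' : ∀ p q, dX p q ≤ B * dY (e p) (e q)) :
    IsQCWith dX dY (A * B) e :=
  ⟨hAB, linDil_le_mul hA hB he he'⟩

end Dilatation

section Chordal

open OnePoint

variable {E : Type*} [NormedAddCommGroup E]

theorem chordal_coe_coe (z w : E) :
    chordal (z : OnePoint E) w = 2 * ‖z - w‖ / (√(1 + ‖z‖ ^ 2) * √(1 + ‖w‖ ^ 2)) := by
  rw [← Real.sqrt_mul (by positivity)]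
  rfl

theorem chordal_infty_coe (w : E) : chordal (∞ : OnePoint E) w = 2 / √(1 + ‖w‖ ^ 2) := rfl

theorem chordal_comm (p q : OnePoint E) : chordal p q = chordal q p := by
  induction p using OnePoint.rec <;> induction q using OnePoint.rec
  · rfl
  · rfl
  · rfl
  · simp only [chordal_coe_coe, norm_sub_rev, mul_comm]

variable {f : E → E} {R : ℝ}

theorem sqrt_one_add_sq_norm_le (hfix : ∀ z, R < ‖z‖ → f z = z) (z : E) :
    √(1 + ‖z‖ ^ 2) ≤ √(1 + R ^ 2) * √(1 + ‖f z‖ ^ 2) := by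
  rw [← Real.sqrt_mul (by positivity)]
  apply Real.sqrt_le_sqrt
  rcases le_or_gt ‖z‖ R with hz | hz
  · have : ‖z‖ ^ 2 ≤ R ^ 2 := pow_le_pow_left₀ (norm_nonneg z) hz 2
    nlinarith [sq_nonneg ‖f z‖, sq_nonneg R]
  · rw [hfix z hz]
    nlinarith [sq_nonneg ‖z‖, sq_nonneg R]

theorem chordal_map_le {L : ℝ≥0} (hL : 1 ≤ L) (hf : LipschitzWith L f)
    (hfix : ∀ z, R < ‖z‖ → f z = z) (p q : OnePoint E) :
    chordal (p.map f) (q.map f) ≤ L * (1 + R ^ 2) * chordal p q := by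
  have hL' : (1 : ℝ) ≤ L := hL
  have hsqrt : √(1 + R ^ 2) ≤ 1 + R ^ 2 :=
    (Real.sqrt_le_left (by positivity)).2 (by nlinarith [sq_nonneg R])
  have hweight := sqrt_one_add_sq_norm_le hfix
  have hinfty (w : E) :
      chordal ∞ (f w : OnePoint E) ≤ L * (1 + R ^ 2) * chordal ∞ (w : OnePoint E) := by
    rw [chordal_infty_coe, chordal_infty_coe, mul_div_assoc',
      div_le_div_iff₀ (by positivity) (by positivity)]
    calc 2 * √(1 + ‖w‖ ^ 2) ≤ 1 * ((1 + R ^ 2) * √(1 + ‖f w‖ ^ 2)) * 2 := by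
          rw [one_mul, mul_comm]
          gcongr
          exact (hweight w).trans (mul_le_mul_of_nonneg_right hsqrt (by positivity))
      _ ≤ L * ((1 + R ^ 2) * √(1 + ‖f w‖ ^ 2)) * 2 := by gcongr
      _ = L * (1 + R ^ 2) * 2 * √(1 + ‖f w‖ ^ 2) := by ring
  induction p using OnePoint.rec <;> induction q using OnePoint.rec
  · simp [chordal]
  · exact hinfty _
  · rw [chordal_comm, chordal_comm _ ∞]
    exact hinfty _
  · rename_i z w
    simp only [OnePoint.map_some, chordal_coe_coe, mul_div_assoc']
    rw [div_le_div_iff₀ (by positivity) (by positivity)]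
    have hlip : ‖f z - f w‖ ≤ L * ‖z - w‖ := by
      simpa only [dist_eq_norm] using hf.dist_le_mul z w
    calc 2 * ‖f z - f w‖ * (√(1 + ‖z‖ ^ 2) * √(1 + ‖w‖ ^ 2))
        ≤ 2 * (L * ‖z - w‖) * ((√(1 + R ^ 2) * √(1 + ‖f z‖ ^ 2)) *
            (√(1 + R ^ 2) * √(1 + ‖f w‖ ^ 2))) := by
          gcongr
          · exact hweight z
          · exact hweight w
      _ = L * (√(1 + R ^ 2) * √(1 + R ^ 2)) * (2 * ‖z - w‖) *
            (√(1 + ‖f z‖ ^ 2) * √(1 + ‖f w‖ ^ 2)) := by ring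
      _ = L * (1 + R ^ 2) * (2 * ‖z - w‖) * (√(1 + ‖f z‖ ^ 2) * √(1 + ‖f w‖ ^ 2)) := by
          rw [Real.mul_self_sqrt (by positivity)]

theorem isQCWith_onePointCongr {e : E ≃ₜ E} {L : ℝ≥0} (hL : 1 ≤ L) (he : LipschitzWith L e)
    (he' : LipschitzWith L e.symm) (hfix : ∀ z, R < ‖z‖ → e z = z) :
    IsQCWith chordal chordal ((L * (1 + R ^ 2)) ^ 2) e.onePointCongr := by
  have hfix' : ∀ z, R < ‖z‖ → e.symm z = z := fun z hz => by
    rw [e.symm_apply_eq, hfix z hz]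
  have hM : (1 : ℝ) ≤ L * (1 + R ^ 2) :=
    one_le_mul_of_one_le_of_one_le hL (by nlinarith [sq_nonneg R])
  rw [sq]
  refine isQCWith_of_biLipschitz (by positivity) (zero_lt_one.trans_le hM)
    (one_le_mul_of_one_le_of_one_le hM hM)
    (fun p q => chordal_map_le hL he hfix p q) (fun p q => ?_)
  have h := chordal_map_le hL he' hfix' (e.onePointCongr p) (e.onePointCongr q)
  rwa [show (e.onePointCongr p).map e.symm = p from e.onePointCongr.symm_apply_apply p,
    show (e.onePointCongr q).map e.symm = q from e.onePointCongr.symm_apply_apply q] at h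

theorem image_onePointCongr_image_coe {X : Type*} [TopologicalSpace X] (e : X ≃ₜ X)
    (s : Set X) : e.onePointCongr '' ((↑) '' s) = ((↑) : X → OnePoint X) '' (e '' s) := by
  simp only [image_image]
  rfl

end Chordal

theorem norm_sub_le_mul_of_far {E F : Type*} [SeminormedAddCommGroup E]
    [SeminormedAddCommGroup F] {z w c : E} {z' w' c' : F} {δ K : ℝ} (hK : 0 ≤ K)
    (hz : ‖z' - c'‖ = ‖z - c‖) (hw : ‖w - c‖ ≤ δ) (hw' : ‖w' - c'‖ ≤ δ)
    (h : (K + 1) * δ ≤ (K - 1) * ‖z - c‖) : ‖z' - w'‖ ≤ K * ‖z - w‖ := by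
  have h₁ : ‖z' - w'‖ ≤ ‖z' - c'‖ + ‖w' - c'‖ := norm_sub_le_norm_sub_add_norm_sub _ _ _ |>.trans
    (by rw [norm_sub_rev c' w'])
  have h₂ : ‖z - c‖ - ‖w - c‖ ≤ ‖z - w‖ := by
    simpa using norm_sub_norm_le (z - c) (w - c)
  nlinarith

section Twist

noncomputable def twist (c : ℂ) (θ : ℝ → ℝ) (z : ℂ) : ℂ :=
  c + exp (θ ‖z - c‖ * I) * (z - c)

variable {c : ℂ} {θ : ℝ → ℝ}

theorem norm_twist_sub_center (z : ℂ) : ‖twist c θ z - c‖ = ‖z - c‖ := by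
  rw [twist, add_sub_cancel_left, norm_mul, norm_exp_ofReal_mul_I, one_mul]

theorem twist_eq_self {z : ℂ} (h : θ ‖z - c‖ = 0) : twist c θ z = z := by
  rw [twist, h, ofReal_zero, zero_mul, exp_zero, one_mul, add_sub_cancel]

theorem twist_neg_twist (z : ℂ) : twist c (-θ) (twist c θ z) = z := by
  rw [twist, norm_twist_sub_center, twist, add_sub_cancel_left, ← mul_assoc, ← exp_add,
    Pi.neg_apply, ofReal_neg, neg_mul, neg_add_cancel, exp_zero, one_mul, add_sub_cancel]

theorem add_mul_twist_sub {u : ℂ} (hu : ‖u‖ = 1) (c' z : ℂ) :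
    c' + u * (twist c θ z - c) = twist c' θ (c' + u * (z - c)) := by
  rw [twist, twist, add_sub_cancel_left, add_sub_cancel_left, norm_mul, hu, one_mul]
  ring

theorem norm_exp_mul_I_sub_exp_mul_I_le (s t : ℝ) : ‖exp (s * I) - exp (t * I)‖ ≤ |s - t| := by
  have : exp (s * I) - exp (t * I) = exp (t * I) * (exp (I * ↑(s - t)) - 1) := by
    rw [mul_sub, ← exp_add, ofReal_sub]
    ring_nf
  rw [this, norm_mul, norm_exp_ofReal_mul_I, one_mul, ← Real.norm_eq_abs]
  exact Real.norm_exp_I_mul_ofReal_sub_one_le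

theorem norm_twist_sub_twist_le {C R : ℝ} (hC : 0 ≤ C) (hR₀ : 0 ≤ R)
    (hθ : ∀ s t, |θ s - θ t| ≤ C * |s - t|) (hR : ∀ s, R ≤ s → θ s = 0) (z w : ℂ) :
    ‖twist c θ z - twist c θ w‖ ≤ (1 + C * R) * ‖z - w‖ := by
  wlog hzw : ‖w - c‖ ≤ ‖z - c‖ generalizing z w
  · rw [norm_sub_rev, norm_sub_rev z]
    exact this w z (le_of_not_ge hzw)
  rcases le_or_gt R ‖w - c‖ with hw | hw
  · have : 0 ≤ C * R := mul_nonneg hC hR₀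
    rw [twist_eq_self (hR _ hw), twist_eq_self (hR _ (hw.trans hzw))]
    nlinarith [norm_nonneg (z - w)]
  have hsplit : twist c θ z - twist c θ w = exp (θ ‖z - c‖ * I) * (z - w) +
      (exp (θ ‖z - c‖ * I) - exp (θ ‖w - c‖ * I)) * (w - c) := by
    simp only [twist]
    ring
  have hangle : |θ ‖z - c‖ - θ ‖w - c‖| ≤ C * ‖z - w‖ := by
    refine (hθ _ _).trans (mul_le_mul_of_nonneg_left ?_ hC)
    simpa using abs_norm_sub_norm_le (z - c) (w - c)
  calc ‖twist c θ z - twist c θ w‖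
      ≤ ‖z - w‖ + |θ ‖z - c‖ - θ ‖w - c‖| * ‖w - c‖ := by
        rw [hsplit]
        refine (norm_add_le _ _).trans ?_
        rw [norm_mul, norm_mul, norm_exp_ofReal_mul_I, one_mul]
        gcongr
        exact norm_exp_mul_I_sub_exp_mul_I_le _ _
    _ ≤ ‖z - w‖ + C * ‖z - w‖ * R := by gcongr
    _ = (1 + C * R) * ‖z - w‖ := by ring

end Twist

section CantorBlocks

theorem mem_cantorSet_iff_exists {v : ℝ} :
    v ∈ cantorSet ↔ ∃ w ∈ cantorSet, w / 3 = v ∨ (2 + w) / 3 = v := by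
  conv_lhs => rw [cantorSet_eq_union_halves]
  simp only [mem_union, mem_image]
  constructor
  · rintro (⟨w, hw, h⟩ | ⟨w, hw, h⟩)
    exacts [⟨w, hw, .inl h⟩, ⟨w, hw, .inr h⟩]
  · rintro ⟨w, hw, h | h⟩
    exacts [.inl ⟨w, hw, h⟩, .inr ⟨w, hw, h⟩]

theorem le_third_or_two_thirds_le_of_mem_cantorSet {v : ℝ} (hv : v ∈ cantorSet) :
    v ≤ 1 / 3 ∨ 2 / 3 ≤ v := by
  obtain ⟨w, hw, rfl | rfl⟩ := mem_cantorSet_iff_exists.1 hv <;>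
    have := cantorSet_subset_unitInterval hw
  · exact .inl (by linarith [this.2])
  · exact .inr (by linarith [this.1])

theorem digit_add_div_three_mem_cantorSet_iff (d : Bool) {w : ℝ} (hw : w ∈ Icc (0 : ℝ) 1) :
    ((if d then 2 else 0) + w) / 3 ∈ cantorSet ↔ w ∈ cantorSet := by
  refine ⟨fun h => ?_, fun h => mem_cantorSet_iff_exists.2 ⟨w, h, by cases d <;> simp⟩⟩
  obtain ⟨w', hw', h'⟩ := mem_cantorSet_iff_exists.1 h
  have := cantorSet_subset_unitInterval hw'
  have hw'w : w' = w := by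
    cases d <;> simp only [Bool.false_eq_true, ↓reduceIte] at h' <;> rcases h' with h' | h' <;>
      linarith [hw.1, hw.2, this.1, this.2]
  exact hw'w ▸ hw'

theorem one_sub_mem_cantorSet {v : ℝ} (hv : v ∈ cantorSet) : 1 - v ∈ cantorSet := by
  have key : ∀ n, ∀ u ∈ preCantorSet n, 1 - u ∈ preCantorSet n := by
    intro n
    induction n with
    | zero => exact fun u hu => ⟨by linarith [hu.2], by linarith [hu.1]⟩
    | succ n ih =>
      rintro u (⟨w, hw, rfl⟩ | ⟨w, hw, rfl⟩)
      · exact .inr ⟨1 - w, ih w hw, by ring⟩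
      · exact .inl ⟨1 - w, ih w hw, by ring⟩
  exact mem_iInter.2 fun n => key n v (mem_iInter.1 hv n)

/-- Centre of the level-`m` interval of the Cantor construction selected by the digits
`a 0, …, a (m - 1)`, where `true` selects the right third. -/
noncomputable def blockCenter (a : ℕ → Bool) : ℕ → ℝ
  | 0 => 1 / 2
  | m + 1 => blockCenter a m + (if a m then 1 else -1) * 3⁻¹ ^ (m + 1)

theorem abs_blockCenter_succ_sub (a : ℕ → Bool) (m : ℕ) :
    |blockCenter a (m + 1) - blockCenter a m| = 3⁻¹ ^ (m + 1) := by
  rw [blockCenter, add_sub_cancel_left]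
  cases a m <;> simp

theorem blockCenter_add_mem_cantorSet_iff (a : ℕ → Bool) (m : ℕ) {v : ℝ}
    (hv : v ∈ Icc (0 : ℝ) 1) :
    blockCenter a m + 3⁻¹ ^ m * (v - 1 / 2) ∈ cantorSet ↔ v ∈ cantorSet := by
  induction m generalizing v with
  | zero => rw [blockCenter, pow_zero, one_mul, add_sub_cancel]
  | succ m ih =>
    have hv' : ((if a m then 2 else 0) + v) / 3 ∈ Icc (0 : ℝ) 1 := by
      constructor <;> cases a m <;> simp only [Bool.false_eq_true, ↓reduceIte, zero_add] <;>
        linarith [hv.1, hv.2]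
    rw [← digit_add_div_three_mem_cantorSet_iff (a m) hv, ← ih hv', blockCenter]
    convert Iff.rfl using 2
    cases a m <;>
      simp only [Bool.false_eq_true, ↓reduceIte, zero_add, inv_pow, one_div, neg_mul, one_mul] <;>
      ring

theorem exists_eq_blockCenter_add {a : ℕ → Bool} {m : ℕ} {r : ℝ}
    (h : |r - blockCenter a m| ≤ 3⁻¹ ^ m / 2) :
    ∃ v ∈ Icc (0 : ℝ) 1, r = blockCenter a m + 3⁻¹ ^ m * (v - 1 / 2) := by
  have ht : (0 : ℝ) < 3⁻¹ ^ m := by positivity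
  set u := (r - blockCenter a m) / 3⁻¹ ^ m
  have hu : r - blockCenter a m = 3⁻¹ ^ m * u := (mul_div_cancel₀ _ ht.ne').symm
  rw [hu, abs_mul, abs_of_pos ht] at h
  have hu' : |u| ≤ 1 / 2 := le_of_mul_le_mul_left (by linarith) ht
  rw [abs_le] at hu'
  exact ⟨u + 1 / 2, ⟨by linarith, by linarith⟩, by linarith⟩

theorem abs_sub_blockCenter_le_of_lt (a : ℕ → Bool) (m : ℕ) {r : ℝ} (hr : r ∈ cantorSet)
    (h : |r - blockCenter a m| < 3 / 2 * 3⁻¹ ^ m) : |r - blockCenter a m| ≤ 3⁻¹ ^ m / 2 := by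
  induction m with
  | zero =>
    have := cantorSet_subset_unitInterval hr
    rw [blockCenter, abs_le]
    constructor <;> linarith [this.1, this.2]
  | succ m ih =>
    have ht : (0 : ℝ) < 3⁻¹ ^ m := by positivity
    obtain ⟨v, hv, rfl⟩ := exists_eq_blockCenter_add <| ih <| by
      have hstep := abs_blockCenter_succ_sub a m
      rw [pow_succ] at h hstep
      linarith [abs_sub_le r (blockCenter a (m + 1)) (blockCenter a m)]
    have hvC := (blockCenter_add_mem_cantorSet_iff a m hv).1 hr
    set c : ℝ := if a m then 5 / 6 else 1 / 6
    have hshift : blockCenter a m + 3⁻¹ ^ m * (v - 1 / 2) - blockCenter a (m + 1) =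
        3⁻¹ ^ m * (v - c) := by
      simp only [c, blockCenter, pow_succ]
      cases a m <;> simp only [Bool.false_eq_true, ↓reduceIte, inv_pow, one_div, neg_mul, one_mul,
        add_sub_add_left_eq_sub, sub_neg_eq_add] <;> ring
    rw [hshift, abs_mul, abs_of_pos ht, pow_succ] at h ⊢
    have hvc : |v - c| < 1 / 2 := by nlinarith
    suffices |v - c| ≤ 1 / 6 by nlinarith
    rw [abs_lt] at hvc
    rw [abs_le]
    rcases le_third_or_two_thirds_le_of_mem_cantorSet hvC with hv3 | hv3 <;>
      cases hm : a m <;> simp only [c, hm, Bool.false_eq_true, ↓reduceIte] at hvc ⊢ <;>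
      constructor <;> linarith [hv.1, hv.2, hvc.1, hvc.2]

theorem blockCenter_eq_sum_ofDigitsTerm (a : ℕ → Bool) (m : ℕ) :
    blockCenter a m =
      ∑ i ∈ Finset.range m, Real.ofDigitsTerm (fun i => cond (a i) (2 : Fin 3) 0) i +
        3⁻¹ ^ m / 2 := by
  induction m with
  | zero => simp [blockCenter]
  | succ m ih =>
    rw [blockCenter, ih, Finset.sum_range_succ, Real.ofDigitsTerm]
    cases a m <;>
      simp only [Bool.false_eq_true, ↓reduceIte, cond_false, cond_true, Fin.isValue, inv_pow,
        neg_mul, one_mul, Fin.coe_ofNat_eq_mod, Nat.zero_mod, Nat.mod_succ, CharP.cast_eq_zero,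
        Nat.cast_ofNat, zero_mul, add_zero] <;>
      ring

theorem blockCenter_add_mul_sub_mem_cantorSet (b : ℕ → Bool) {a : ℕ → Bool} {m : ℕ} {r s : ℝ}
    (hr : r ∈ cantorSet) (hrm : |r - blockCenter a m| ≤ 3⁻¹ ^ m / 2) (hs : s = 1 ∨ s = -1) :
    blockCenter b m + s * (r - blockCenter a m) ∈ cantorSet := by
  obtain ⟨v, hv, rfl⟩ := exists_eq_blockCenter_add hrm
  have hvC := (blockCenter_add_mem_cantorSet_iff a m hv).1 hr
  rcases hs with rfl | rfl
  · simpa using (blockCenter_add_mem_cantorSet_iff b m hv).2 hvC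
  · have h1v : 1 - v ∈ Icc (0 : ℝ) 1 := ⟨by linarith [hv.2], by linarith [hv.1]⟩
    convert (blockCenter_add_mem_cantorSet_iff b m h1v).2 (one_sub_mem_cantorSet hvC) using 1
    ring

end CantorBlocks

namespace NestedTwist

def IsAddress (a : ℕ → Bool) (x : ℝ) : Prop :=
  ∀ m, |x - blockCenter a m| ≤ 3⁻¹ ^ m / 2

theorem isAddress_cantorToBinary {x : ℝ} (hx : x ∈ cantorSet) :
    IsAddress (cantorToBinary x).get x := by
  intro m
  have h₁ : ∑ i ∈ Finset.range m, Real.ofDigitsTerm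
      (fun i => cond ((cantorToBinary x).get i) (2 : Fin 3) 0) i ≤ x :=
    ofDigits_cantorToTernary_sum_le hx
  have h₂ : x - 3⁻¹ ^ m ≤ ∑ i ∈ Finset.range m, Real.ofDigitsTerm
      (fun i => cond ((cantorToBinary x).get i) (2 : Fin 3) 0) i :=
    le_ofDigits_cantorToTernary_sum hx
  rw [blockCenter_eq_sum_ofDigitsTerm, abs_le]
  constructor <;> linarith

section Discs

/-- The radius `4/3 · 3⁻ᵐ` exceeds `7/9 · 3⁻ᵐ`, the reach of the next disc about this centre,
and stays below `3/2 · 3⁻ᵐ`, within which `C` only meets the block itself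
(`abs_sub_blockCenter_le_of_lt`). -/
def disc (a : ℕ → Bool) (m : ℕ) : Set ℂ := closedBall (blockCenter a m : ℂ) (4 / 3 * 3⁻¹ ^ m)

noncomputable def depth (a : ℕ → Bool) (z : ℂ) : ℕ := sInf {m | z ∉ disc a m}

variable {a : ℕ → Bool} {x : ℝ} {z : ℂ} {m : ℕ}

theorem disc_zero_eq (a b : ℕ → Bool) : disc a 0 = disc b 0 := rfl

theorem norm_blockCenter_succ_sub (a : ℕ → Bool) (m : ℕ) :
    ‖(blockCenter a (m + 1) : ℂ) - blockCenter a m‖ = 3⁻¹ ^ (m + 1) := by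
  rw [← ofReal_sub, norm_real, Real.norm_eq_abs, abs_blockCenter_succ_sub]

theorem norm_sub_blockCenter_le_of_mem_disc_succ (h : z ∈ disc a (m + 1)) :
    ‖z - blockCenter a m‖ ≤ 7 / 9 * 3⁻¹ ^ m := by
  rw [disc, mem_closedBall_iff_norm, pow_succ] at h
  have := norm_blockCenter_succ_sub a m
  rw [pow_succ] at this
  linarith [norm_sub_le_norm_sub_add_norm_sub z (blockCenter a (m + 1) : ℂ) (blockCenter a m)]

theorem disc_antitone (a : ℕ → Bool) : Antitone (disc a) := by
  refine antitone_nat_of_succ_le fun m z hz => ?_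
  rw [disc, mem_closedBall_iff_norm]
  linarith [norm_sub_blockCenter_le_of_mem_disc_succ hz, pow_pos (by norm_num : (0 : ℝ) < 3⁻¹) m]

theorem IsAddress.mem_disc (hx : IsAddress a x) (m : ℕ) : (x : ℂ) ∈ disc a m := by
  rw [disc, mem_closedBall_iff_norm, ← ofReal_sub, norm_real, Real.norm_eq_abs]
  linarith [hx m, pow_pos (by norm_num : (0 : ℝ) < 3⁻¹) m]

theorem IsAddress.exists_not_mem_disc (hx : IsAddress a x) (hz : z ≠ x) :
    ∃ m, z ∉ disc a m := by
  obtain ⟨m, hm⟩ := exists_pow_lt_of_lt_one (show 0 < ‖z - x‖ / 2 by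
    have := norm_pos_iff.2 (sub_ne_zero.2 hz); linarith) (show (3 : ℝ)⁻¹ < 1 by norm_num)
  refine ⟨m, fun h => ?_⟩
  rw [disc, mem_closedBall_iff_norm] at h
  have hxm := hx m
  rw [← Real.norm_eq_abs, ← norm_real, ofReal_sub] at hxm
  linarith [norm_sub_le_norm_sub_add_norm_sub z (blockCenter a m : ℂ) x,
    norm_sub_rev (x : ℂ) (blockCenter a m : ℂ), pow_pos (by norm_num : (0 : ℝ) < 3⁻¹) m]

theorem IsAddress.mem_disc_iff_lt_depth (hx : IsAddress a x) (hz : z ≠ x) :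
    z ∈ disc a m ↔ m < depth a z := by
  refine ⟨fun h => lt_of_not_ge fun hm => ?_, fun h => not_not.1 (Nat.notMem_of_lt_sInf h)⟩
  exact Nat.sInf_mem (hx.exists_not_mem_disc hz) (disc_antitone a hm h)

theorem IsAddress.eq_of_forall_mem_disc (hx : IsAddress a x) (h : ∀ m, z ∈ disc a m) :
    z = x := by
  by_contra hz
  obtain ⟨m, hm⟩ := hx.exists_not_mem_disc hz
  exact hm (h m)

theorem mem_disc_imp_total (a : ℕ → Bool) (z w : ℂ) :
    (∀ k, z ∈ disc a k → w ∈ disc a k) ∨ (∀ k, w ∈ disc a k → z ∈ disc a k) := by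
  by_contra! h
  obtain ⟨⟨k, hzk, hwk⟩, ⟨l, hwl, hzl⟩⟩ := h
  rcases le_total k l with hkl | hlk
  · exact hwk (disc_antitone a hkl hwl)
  · exact hzl (disc_antitone a hlk hzk)

end Discs

section Level

variable (a b : ℕ → Bool)

/-- The sign at level `m + 1` is forced: it is the one for which `rigid a b (m + 1)` also maps
`blockCenter a m` to `blockCenter b m` (`rigid_succ`). -/
def blockSign : ℕ → ℝ
  | 0 => 1
  | m + 1 => if a m = b m then 1 else -1

noncomputable def rigid (m : ℕ) (z : ℂ) : ℂ :=
  blockCenter b m + blockSign a b m * (z - blockCenter a m)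

noncomputable def profile (u : ℝ) : ℝ := max 0 (min 1 (4 - 3 * u))

/-- `ω = ±1` is the direction of twisting: the inverse of the construction for `a, b, ω` is the
one for `b, a, -ω` (`levelMap_levelMap`). -/
noncomputable def twistAngle (ω : ℝ) (m : ℕ) (s : ℝ) : ℝ :=
  if blockSign a b (m + 1) = blockSign a b m then 0 else ω * π * profile (3 ^ m * s)

noncomputable def levelMap (ω : ℝ) (m : ℕ) (z : ℂ) : ℂ :=
  rigid a b m (twist (blockCenter a m) (twistAngle a b ω m) z)

variable {a b} {ω : ℝ} {m : ℕ}

theorem blockSign_eq_one_or_eq_neg_one (m : ℕ) : blockSign a b m = 1 ∨ blockSign a b m = -1 := by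
  cases m with
  | zero => exact .inl rfl
  | succ m => rw [blockSign]; split_ifs <;> simp

theorem blockSign_mul_self (m : ℕ) : blockSign a b m * blockSign a b m = 1 := by
  rcases blockSign_eq_one_or_eq_neg_one (a := a) (b := b) m with h | h <;> rw [h] <;> norm_num

theorem norm_blockSign (m : ℕ) : ‖(blockSign a b m : ℂ)‖ = 1 := by
  rcases blockSign_eq_one_or_eq_neg_one (a := a) (b := b) m with h | h <;> simp [h]

theorem blockSign_comm (m : ℕ) : blockSign b a m = blockSign a b m := by
  cases m with
  | zero => rfl
  | succ m => simp only [blockSign, eq_comm]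

theorem blockCenter_succ_sub_eq (m : ℕ) :
    blockCenter b (m + 1) - blockCenter b m =
      blockSign a b (m + 1) * (blockCenter a (m + 1) - blockCenter a m) := by
  simp only [blockCenter, add_sub_cancel_left, blockSign]
  cases a m <;> cases b m <;> simp

theorem rigid_zero (z : ℂ) : rigid a b 0 z = z := by
  simp [rigid, blockSign, blockCenter]

theorem rigid_succ (m : ℕ) (z : ℂ) :
    rigid a b (m + 1) z = blockCenter b m + blockSign a b (m + 1) * (z - blockCenter a m) := by
  have h := congrArg ((↑) : ℝ → ℂ) (blockCenter_succ_sub_eq (a := a) (b := b) m)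
  push_cast at h
  rw [rigid]
  linear_combination h

theorem norm_rigid_sub_blockCenter (m : ℕ) (z : ℂ) :
    ‖rigid a b m z - blockCenter b m‖ = ‖z - blockCenter a m‖ := by
  rw [rigid, add_sub_cancel_left, norm_mul, norm_blockSign, one_mul]

theorem rigid_rigid (m : ℕ) (z : ℂ) : rigid b a m (rigid a b m z) = z := by
  have h := congrArg ((↑) : ℝ → ℂ) (blockSign_mul_self (a := a) (b := b) m)
  push_cast at h
  rw [rigid, rigid, blockSign_comm]
  linear_combination (z - blockCenter a m) * h

theorem profile_eq_one {u : ℝ} (h : u ≤ 1) : profile u = 1 := by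
  rw [profile, min_eq_left (by linarith), max_eq_right zero_le_one]

theorem profile_eq_zero {u : ℝ} (h : 4 / 3 ≤ u) : profile u = 0 :=
  max_eq_left (min_le_of_right_le (by linarith))

theorem abs_profile_sub_le (u v : ℝ) : |profile u - profile v| ≤ 3 * |u - v| := by
  calc |profile u - profile v| ≤ |min 1 (4 - 3 * u) - min 1 (4 - 3 * v)| := by
        simpa only [profile, max_comm (0 : ℝ)] using
          abs_max_sub_max_le_abs (min 1 (4 - 3 * u)) (min 1 (4 - 3 * v)) 0
    _ ≤ |(4 - 3 * u) - (4 - 3 * v)| := by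
        simpa using abs_min_sub_min_le_max 1 (4 - 3 * u) 1 (4 - 3 * v)
    _ = 3 * |u - v| := by
        rw [show 4 - 3 * u - (4 - 3 * v) = 3 * (v - u) by ring, abs_mul, abs_sub_comm]
        norm_num

theorem twistAngle_eq_zero {s : ℝ} (h : 4 / 3 * 3⁻¹ ^ m ≤ s) : twistAngle a b ω m s = 0 := by
  have : 4 / 3 ≤ 3 ^ m * s := by
    have := mul_le_mul_of_nonneg_left h (pow_nonneg (by norm_num : (0 : ℝ) ≤ 3) m)
    rwa [mul_left_comm, ← mul_pow, mul_inv_cancel₀ (by norm_num), one_pow, mul_one] at this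
  rw [twistAngle, profile_eq_zero this]
  simp

theorem abs_twistAngle_sub_le (hω : ω = 1 ∨ ω = -1) (s t : ℝ) :
    |twistAngle a b ω m s - twistAngle a b ω m t| ≤ 3 * π * 3 ^ m * |s - t| := by
  have hω' : |ω| = 1 := by rcases hω with rfl | rfl <;> simp
  unfold twistAngle
  split_ifs
  · rw [sub_self, abs_zero]
    positivity
  rw [← mul_sub, abs_mul, abs_mul, hω', abs_of_pos Real.pi_pos, one_mul]
  calc π * |profile (3 ^ m * s) - profile (3 ^ m * t)| ≤ π * (3 * |3 ^ m * s - 3 ^ m * t|) := by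
        gcongr
        exact abs_profile_sub_le _ _
    _ = 3 * π * 3 ^ m * |s - t| := by
        rw [← mul_sub, abs_mul, abs_of_pos (by positivity : (0 : ℝ) < 3 ^ m)]
        ring

theorem exp_twistAngle (hω : ω = 1 ∨ ω = -1) {s : ℝ} (h : s ≤ 3⁻¹ ^ m) :
    exp (twistAngle a b ω m s * I) = blockSign a b (m + 1) * blockSign a b m := by
  have : 3 ^ m * s ≤ 1 := by
    have := mul_le_mul_of_nonneg_left h (pow_nonneg (by norm_num : (0 : ℝ) ≤ 3) m)
    rwa [← mul_pow, mul_inv_cancel₀ (by norm_num), one_pow] at this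
  rw [twistAngle, profile_eq_one this, mul_one]
  rcases blockSign_eq_one_or_eq_neg_one (a := a) (b := b) m with h₁ | h₁ <;>
    rcases blockSign_eq_one_or_eq_neg_one (a := a) (b := b) (m + 1) with h₂ | h₂ <;>
    rw [h₁, h₂] <;> norm_num <;>
    rcases hω with rfl | rfl <;> simp [exp_neg, exp_pi_mul_I]

theorem twistAngle_comm_neg (ω : ℝ) (m : ℕ) :
    twistAngle b a (-ω) m = -twistAngle a b ω m := by
  ext s
  simp only [twistAngle, blockSign_comm, Pi.neg_apply]
  split_ifs <;> ring

end Level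

section LevelMap

variable {a b : ℕ → Bool} {ω : ℝ} {m : ℕ} {z : ℂ}

theorem norm_levelMap_sub_blockCenter (z : ℂ) :
    ‖levelMap a b ω m z - blockCenter b m‖ = ‖z - blockCenter a m‖ := by
  rw [levelMap, norm_rigid_sub_blockCenter, norm_twist_sub_center]

theorem levelMap_eq_rigid (h : z ∉ disc a m) : levelMap a b ω m z = rigid a b m z := by
  rw [disc, mem_closedBall_iff_norm, not_le] at h
  rw [levelMap, twist_eq_self (twistAngle_eq_zero h.le)]

theorem levelMap_eq_rigid_succ (hω : ω = 1 ∨ ω = -1) (h : ‖z - blockCenter a m‖ ≤ 3⁻¹ ^ m) :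
    levelMap a b ω m z = rigid a b (m + 1) z := by
  have hs := congrArg ((↑) : ℝ → ℂ) (blockSign_mul_self (a := a) (b := b) m)
  push_cast at hs
  rw [levelMap, twist, exp_twistAngle hω h, rigid, rigid_succ]
  linear_combination (blockSign a b (m + 1) : ℂ) * (z - blockCenter a m) * hs

theorem norm_levelMap_sub_levelMap_le (hω : ω = 1 ∨ ω = -1) (z w : ℂ) :
    ‖levelMap a b ω m z - levelMap a b ω m w‖ ≤ 14 * ‖z - w‖ := by
  have ht : (0 : ℝ) < 3 ^ m := by positivity
  have hlip := norm_twist_sub_twist_le (c := blockCenter a m) (θ := twistAngle a b ω m)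
    (by positivity) (by positivity) (abs_twistAngle_sub_le hω) (fun _ => twistAngle_eq_zero) z w
  have hCR : 3 * π * 3 ^ m * (4 / 3 * 3⁻¹ ^ m) = 4 * π := by
    rw [inv_pow]
    field_simp
  rw [hCR] at hlip
  rw [levelMap, levelMap, rigid, rigid, add_sub_add_left_eq_sub, ← mul_sub, norm_mul,
    norm_blockSign, one_mul, sub_sub_sub_cancel_right]
  exact hlip.trans (by nlinarith [Real.pi_lt_d2, norm_nonneg (z - w)])

theorem levelMap_levelMap (ω : ℝ) (m : ℕ) (z : ℂ) :
    levelMap b a (-ω) m (levelMap a b ω m z) = z := by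
  have h : twist (blockCenter b m) (-twistAngle a b ω m)
      (rigid a b m (twist (blockCenter a m) (twistAngle a b ω m) z)) = rigid a b m z := by
    simp only [rigid]
    rw [← add_mul_twist_sub (norm_blockSign m), twist_neg_twist]
  rw [levelMap, levelMap, twistAngle_comm_neg, h, rigid_rigid]

end LevelMap

end NestedTwist

open NestedTwist

/-- At depth `0` the level `depth a z - 1` truncates to `0`; there the twist is trivial and
`rigid a b 0 = id`, so points outside `disc a 0` are fixed. -/
noncomputable def nestedTwist (a b : ℕ → Bool) (x y ω : ℝ) (z : ℂ) : ℂ :=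
  if z = x then y else levelMap a b ω (depth a z - 1) z

section NestedTwistMap

variable {a b : ℕ → Bool} {x y ω : ℝ} {z w : ℂ}

theorem nestedTwist_self : nestedTwist a b x y ω x = y := if_pos rfl

theorem nestedTwist_of_ne (hz : z ≠ x) :
    nestedTwist a b x y ω z = levelMap a b ω (depth a z - 1) z := if_neg hz

theorem nestedTwist_of_not_mem_disc_zero (hx : IsAddress a x) (hz : z ∉ disc a 0) :
    nestedTwist a b x y ω z = z := by
  have hzx : z ≠ x := fun h => hz (h ▸ hx.mem_disc 0)
  have hdepth : depth a z = 0 := by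
    by_contra h
    exact hz ((hx.mem_disc_iff_lt_depth hzx).2 (Nat.pos_of_ne_zero h))
  rw [nestedTwist_of_ne hzx, hdepth, levelMap_eq_rigid hz, rigid_zero]

theorem nestedTwist_not_mem_disc_depth (hx : IsAddress a x) (hω : ω = 1 ∨ ω = -1)
    (hz : z ≠ x) : nestedTwist a b x y ω z ∉ disc b (depth a z) := by
  have hz' : z ∉ disc a (depth a z) := fun h =>
    lt_irrefl _ ((hx.mem_disc_iff_lt_depth hz).1 h)
  rcases hn : depth a z with _ | J
  · rw [hn] at hz'
    rwa [nestedTwist_of_not_mem_disc_zero hx hz', disc_zero_eq b a]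
  rw [hn] at hz'
  rw [nestedTwist_of_ne hz, hn, Nat.add_sub_cancel]
  by_cases hrot : ‖z - blockCenter a J‖ ≤ 3⁻¹ ^ J
  · rwa [levelMap_eq_rigid_succ hω hrot, disc, mem_closedBall_iff_norm,
      norm_rigid_sub_blockCenter, ← mem_closedBall_iff_norm]
  · intro h
    have := norm_sub_blockCenter_le_of_mem_disc_succ h
    rw [norm_levelMap_sub_blockCenter] at this
    linarith [pow_pos (by norm_num : (0 : ℝ) < 3⁻¹) J]

theorem nestedTwist_mem_disc_iff (hx : IsAddress a x) (hy : IsAddress b y)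
    (hω : ω = 1 ∨ ω = -1) (m : ℕ) :
    nestedTwist a b x y ω z ∈ disc b m ↔ z ∈ disc a m := by
  by_cases hz : z = x
  · subst hz
    simp only [nestedTwist_self, hx.mem_disc, hy.mem_disc]
  rw [hx.mem_disc_iff_lt_depth hz]
  constructor
  · intro h
    by_contra hm
    exact nestedTwist_not_mem_disc_depth hx hω hz (disc_antitone b (not_lt.1 hm) h)
  · intro hm
    have hJ : depth a z - 1 < depth a z := by omega
    have hzJ := (hx.mem_disc_iff_lt_depth hz).2 hJ
    refine disc_antitone b (show m ≤ depth a z - 1 by omega) ?_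
    rw [disc, mem_closedBall_iff_norm] at hzJ ⊢
    rwa [nestedTwist_of_ne hz, norm_levelMap_sub_blockCenter]

theorem nestedTwist_ne (hx : IsAddress a x) (hy : IsAddress b y) (hω : ω = 1 ∨ ω = -1)
    (hz : z ≠ x) : nestedTwist a b x y ω z ≠ y := fun h =>
  hz <| hx.eq_of_forall_mem_disc fun m =>
    (nestedTwist_mem_disc_iff hx hy hω m).1 (h ▸ hy.mem_disc m)

theorem depth_nestedTwist (hx : IsAddress a x) (hy : IsAddress b y) (hω : ω = 1 ∨ ω = -1)
    (hz : z ≠ x) : depth b (nestedTwist a b x y ω z) = depth a z :=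
  eq_of_forall_lt_iff fun m => by
    rw [← hy.mem_disc_iff_lt_depth (nestedTwist_ne hx hy hω hz), ← hx.mem_disc_iff_lt_depth hz,
      nestedTwist_mem_disc_iff hx hy hω]

theorem nestedTwist_nestedTwist (hx : IsAddress a x) (hy : IsAddress b y)
    (hω : ω = 1 ∨ ω = -1) (z : ℂ) :
    nestedTwist b a y x (-ω) (nestedTwist a b x y ω z) = z := by
  by_cases hz : z = x
  · rw [hz, nestedTwist_self, nestedTwist_self]
  rw [nestedTwist_of_ne (nestedTwist_ne hx hy hω hz), depth_nestedTwist hx hy hω hz,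
    nestedTwist_of_ne hz, levelMap_levelMap]

theorem norm_nestedTwist_sub_le_of_far (hx : IsAddress a x) (hy : IsAddress b y)
    (hω : ω = 1 ∨ ω = -1) {k : ℕ}
    (hz : ‖nestedTwist a b x y ω z - blockCenter b k‖ = ‖z - blockCenter a k‖)
    (hzk : 3⁻¹ ^ k < ‖z - blockCenter a k‖) (hw : w ∈ disc a (k + 1)) :
    ‖nestedTwist a b x y ω z - nestedTwist a b x y ω w‖ ≤ 14 * ‖z - w‖ :=
  norm_sub_le_mul_of_far (by norm_num) hz (norm_sub_blockCenter_le_of_mem_disc_succ hw)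
    (norm_sub_blockCenter_le_of_mem_disc_succ ((nestedTwist_mem_disc_iff hx hy hω _).2 hw))
    (by linarith [pow_pos (by norm_num : (0 : ℝ) < 3⁻¹) k])

theorem norm_nestedTwist_sub_le_of_deeper (hx : IsAddress a x) (hy : IsAddress b y)
    (hω : ω = 1 ∨ ω = -1) (hz : z ≠ x) (hzw : ∀ k, z ∈ disc a k → w ∈ disc a k) :
    ‖nestedTwist a b x y ω z - nestedTwist a b x y ω w‖ ≤ 14 * ‖z - w‖ := by
  set J := depth a z - 1
  have hFz : nestedTwist a b x y ω z = levelMap a b ω J z := nestedTwist_of_ne hz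
  have hzJ : z ∉ disc a (J + 1) := by
    rw [hx.mem_disc_iff_lt_depth hz]
    omega
  by_cases hwJ : w ∈ disc a (J + 1)
  swap
  · have hwx : w ≠ x := fun h => hwJ (h ▸ hx.mem_disc _)
    have hdepth : depth a w - 1 = J := by
      have h₁ : depth a z ≤ depth a w := le_of_forall_lt fun k hk =>
        (hx.mem_disc_iff_lt_depth hwx).1 (hzw k ((hx.mem_disc_iff_lt_depth hz).2 hk))
      rw [hx.mem_disc_iff_lt_depth hwx] at hwJ
      omega
    rw [hFz, nestedTwist_of_ne hwx, hdepth]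
    exact norm_levelMap_sub_levelMap_le hω z w
  by_cases hrot : ‖z - blockCenter a J‖ ≤ 3⁻¹ ^ J
  swap
  · exact norm_nestedTwist_sub_le_of_far hx hy hω
      (by rw [hFz, norm_levelMap_sub_blockCenter]) (not_le.1 hrot) hwJ
  have hFz' : nestedTwist a b x y ω z = rigid a b (J + 1) z :=
    hFz.trans (levelMap_eq_rigid_succ hω hrot)
  by_cases hwJ' : w ∈ disc a (J + 1 + 1)
  · refine norm_nestedTwist_sub_le_of_far hx hy hω
      (by rw [hFz', norm_rigid_sub_blockCenter]) ?_ hwJ'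
    rw [disc, mem_closedBall_iff_norm, not_le] at hzJ
    linarith [pow_pos (by norm_num : (0 : ℝ) < 3⁻¹) (J + 1)]
  · have hwx : w ≠ x := fun h => hwJ' (h ▸ hx.mem_disc _)
    have hdepth : depth a w - 1 = J + 1 := by
      rw [hx.mem_disc_iff_lt_depth hwx] at hwJ hwJ'
      omega
    rw [hFz', ← levelMap_eq_rigid (ω := ω) hzJ, nestedTwist_of_ne hwx, hdepth]
    exact norm_levelMap_sub_levelMap_le hω z w

theorem lipschitzWith_nestedTwist (hx : IsAddress a x) (hy : IsAddress b y)
    (hω : ω = 1 ∨ ω = -1) : LipschitzWith 14 (nestedTwist a b x y ω) := by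
  refine LipschitzWith.of_dist_le_mul fun z w => ?_
  simp only [dist_eq_norm, NNReal.coe_ofNat]
  wlog hzw : ∀ k, z ∈ disc a k → w ∈ disc a k generalizing z w
  · rw [norm_sub_rev, norm_sub_rev z]
    exact this w z ((mem_disc_imp_total a z w).resolve_left hzw)
  by_cases hz : z = x
  · obtain rfl : w = z := hz ▸ hx.eq_of_forall_mem_disc fun k => hzw k (hz ▸ hx.mem_disc k)
    simp
  exact norm_nestedTwist_sub_le_of_deeper hx hy hω hz hzw

theorem mapsTo_nestedTwist_cantorSet (hx : IsAddress a x) (hω : ω = 1 ∨ ω = -1)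
    (hyC : y ∈ cantorSet) :
    MapsTo (nestedTwist a b x y ω) (ofReal '' cantorSet) (ofReal '' cantorSet) := by
  rintro _ ⟨r, hr, rfl⟩
  by_cases hrx : (r : ℂ) = x
  · rw [hrx, nestedTwist_self]
    exact mem_image_of_mem _ hyC
  set J := depth a r - 1
  by_cases hrJ : (r : ℂ) ∈ disc a J
  · rw [disc, mem_closedBall_iff_norm, ← ofReal_sub, norm_real, Real.norm_eq_abs] at hrJ
    have hblock := abs_sub_blockCenter_le_of_lt a J hr
      (by linarith [pow_pos (by norm_num : (0 : ℝ) < 3⁻¹) J])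
    have hrot : ‖(r : ℂ) - blockCenter a J‖ ≤ 3⁻¹ ^ J := by
      rw [← ofReal_sub, norm_real, Real.norm_eq_abs]
      linarith [pow_pos (by norm_num : (0 : ℝ) < 3⁻¹) J]
    rw [nestedTwist_of_ne hrx, levelMap_eq_rigid_succ hω hrot, rigid_succ]
    exact ⟨_, blockCenter_add_mul_sub_mem_cantorSet b hr hblock
      (blockSign_eq_one_or_eq_neg_one _), by push_cast; rfl⟩
  · have hr0 : (r : ℂ) ∉ disc a 0 := by
      rw [hx.mem_disc_iff_lt_depth hrx] at hrJ ⊢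
      omega
    rw [nestedTwist_of_not_mem_disc_zero hx hr0]
    exact mem_image_of_mem _ hr

theorem nestedTwist_eq_self (hx : IsAddress a x) (hz : 2 < ‖z‖) :
    nestedTwist a b x y ω z = z := by
  refine nestedTwist_of_not_mem_disc_zero hx fun h => ?_
  rw [disc, mem_closedBall_iff_norm, blockCenter] at h
  have := norm_sub_norm_le z ((1 / 2 : ℝ) : ℂ)
  norm_num at h this
  linarith

end NestedTwistMap

theorem exists_homeomorph_cantorSet {x y : ℝ} (hx : x ∈ cantorSet) (hy : y ∈ cantorSet) :
    ∃ e : ℂ ≃ₜ ℂ, LipschitzWith 14 e ∧ LipschitzWith 14 e.symm ∧ (∀ z, 2 < ‖z‖ → e z = z) ∧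
      e '' (ofReal '' cantorSet) = ofReal '' cantorSet ∧ e x = y := by
  have ha := isAddress_cantorToBinary hx
  have hb := isAddress_cantorToBinary hy
  have hω : (1 : ℝ) = 1 ∨ (1 : ℝ) = -1 := .inl rfl
  have hω' : (-1 : ℝ) = 1 ∨ (-1 : ℝ) = -1 := .inr rfl
  have hinv := nestedTwist_nestedTwist hb ha hω'
  rw [neg_neg] at hinv
  let e : ℂ ≃ₜ ℂ :=
    { toFun := nestedTwist _ _ x y 1
      invFun := nestedTwist _ _ y x (-1)
      left_inv := nestedTwist_nestedTwist ha hb hω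
      right_inv := hinv
      continuous_toFun := (lipschitzWith_nestedTwist ha hb hω).continuous
      continuous_invFun := (lipschitzWith_nestedTwist hb ha hω').continuous }
  refine ⟨e, lipschitzWith_nestedTwist ha hb hω, lipschitzWith_nestedTwist hb ha hω',
    fun z => nestedTwist_eq_self ha, ?_, nestedTwist_self⟩
  refine (mapsTo_nestedTwist_cantorSet ha hω hy).image_subset.antisymm fun s hs =>
    ⟨e.symm s, mapsTo_nestedTwist_cantorSet hb hω' hx hs, e.apply_symm_apply s⟩

/-- MacManus–Näkki–Palka: the middle-thirds Cantor set (Mathlib's ternary `cantorSet`),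
viewed inside the Riemann sphere, is ambiently quasiconformally homogeneous. -/
theorem cantor_set_is_ambiently_qch :
    AmbQCH ((fun x : ℝ => ((x : ℂ) : OnePoint ℂ)) '' cantorSet) := by
  refine ⟨((14 : ℝ≥0) * (1 + 2 ^ 2)) ^ 2, ?_⟩
  rintro _ ⟨x, hx, rfl⟩ _ ⟨y, hy, rfl⟩
  obtain ⟨e, he, he', hfix, himage, hxy⟩ := exists_homeomorph_cantorSet hx hy
  refine ⟨e.onePointCongr, isQCWith_onePointCongr (by norm_num) he he' hfix, ?_, ?_⟩
  · rw [← image_image (g := ((↑) : ℂ → OnePoint ℂ)), image_onePointCongr_image_coe, himage]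
  · simp [hxy]
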